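/- (Greedy approximation guarantee for monotone submodular functions.) Let U be a finite type, f : Finset U → ℝ monotone and submodular with f(∅) = 0, and let OPT ⊆ U be a finite set with |OPT| = m ≥ 1. Let (S_k)_{k ≥ 0} be a greedy sequence: S_0 = ∅ and for each k, S_{k+1} = S_k ∪ {x_k} where x_k satisfies f(S_k ∪ {x_k}) − f(S_k) ≥ f(S_k ∪ {y}) − f(S_k) for all y ∈ U. Then the set S* = S_m produced after m greedy steps satisfies f(S*) ≥ (1 − 1/e) · f(OPT), where e is Euler's number. -/

import Mathlib

/-!
By monotonicity and submodularity, the gap `f OPT - f S` is at most the sum of the marginal gains at `S` of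
the `m` elements of `OPT`, each of which is at most the greedy gain. So every greedy step
closes at least a `1/m` fraction of the gap, leaving at most `(1 - 1/m) ^ m * f OPT ≤ f OPT / e`
after `m` steps.
-/

open Finset

theorem sub_le_one_sub_one_div_pow_mul {a : ℕ → ℝ} {c m : ℝ} (hm : 1 ≤ m)
    (h : ∀ k, c - a k ≤ m * (a (k + 1) - a k)) (k : ℕ) :
    c - a k ≤ (1 - 1 / m) ^ k * (c - a 0) := by
  induction k with
  | zero => simp
  | succ k ih =>
    have hgain : (c - a k) / m ≤ a (k + 1) - a k := by
      rw [div_le_iff₀ (by linarith)]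
      linarith [h k]
    have hfactor : 0 ≤ 1 - 1 / m := by
      rw [sub_nonneg, div_le_one (by linarith)]
      exact hm
    calc c - a (k + 1) ≤ (1 - 1 / m) * (c - a k) := by
          linarith [show (1 - 1 / m) * (c - a k) = (c - a k) - (c - a k) / m by ring]
      _ ≤ (1 - 1 / m) * ((1 - 1 / m) ^ k * (c - a 0)) := mul_le_mul_of_nonneg_left ih hfactor
      _ = (1 - 1 / m) ^ (k + 1) * (c - a 0) := by ring

section Submodular

variable {U : Type*} [DecidableEq U] {f : Finset U → ℝ}

theorem sub_le_sum_marginal_of_submodular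
    (hsub : ∀ A B : Finset U, A ⊆ B → ∀ x ∉ B, f (B ∪ {x}) - f B ≤ f (A ∪ {x}) - f A)
    (A T : Finset U) :
    f (A ∪ T) - f A ≤ ∑ y ∈ T, (f (A ∪ {y}) - f A) := by
  induction T using Finset.induction with
  | empty => simp
  | @insert a T haT ih =>
    rw [sum_insert haT, union_insert]
    by_cases ha : a ∈ A
    · rw [insert_eq_of_mem (mem_union_left T ha),
        union_eq_left.2 (singleton_subset_iff.2 ha)]
      linarith
    · have hgain := hsub A (A ∪ T) subset_union_left a (by simp [ha, haT])
      rw [union_singleton] at hgain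
      linarith

theorem sub_le_card_mul_marginal_of_forall_le
    (hmono : ∀ A B : Finset U, A ⊆ B → f A ≤ f B)
    (hsub : ∀ A B : Finset U, A ⊆ B → ∀ x ∉ B, f (B ∪ {x}) - f B ≤ f (A ∪ {x}) - f A)
    (OPT A : Finset U) {x : U} (hx : ∀ y, f (A ∪ {y}) - f A ≤ f (A ∪ {x}) - f A) :
    f OPT - f A ≤ OPT.card * (f (A ∪ {x}) - f A) :=
  calc f OPT - f A ≤ f (A ∪ OPT) - f A := by linarith [hmono OPT (A ∪ OPT) subset_union_right]
    _ ≤ ∑ y ∈ OPT, (f (A ∪ {y}) - f A) := sub_le_sum_marginal_of_submodular hsub A OPT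
    _ ≤ ∑ _y ∈ OPT, (f (A ∪ {x}) - f A) := sum_le_sum fun y _ => hx y
    _ = OPT.card * (f (A ∪ {x}) - f A) := by rw [sum_const, nsmul_eq_mul]

end Submodular

theorem submodular_greedy_approximation_guarantee_general
    {U : Type*} [DecidableEq U] (f : Finset U → ℝ)
    (hmono : ∀ A B : Finset U, A ⊆ B → f A ≤ f B)
    (hsub : ∀ A B : Finset U, A ⊆ B → ∀ x ∉ B,
      f (B ∪ {x}) - f B ≤ f (A ∪ {x}) - f A)
    (hempty : f ∅ = 0)
    (OPT : Finset U) (m : ℕ) (hOPT : OPT.card = m) (hm : 1 ≤ m)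
    (S : ℕ → Finset U) (x : ℕ → U)
    (hS0 : S 0 = ∅)
    (hSsucc : ∀ k, S (k + 1) = S k ∪ {x k})
    (hgreedy : ∀ k, ∀ y : U, f (S k ∪ {y}) - f (S k) ≤ f (S k ∪ {x k}) - f (S k)) :
    (1 - 1 / Real.exp 1) * f OPT ≤ f (S m) := by
  have hm' : (1 : ℝ) ≤ m := by exact_mod_cast hm
  have hOPT_nonneg : 0 ≤ f OPT := hempty ▸ hmono ∅ OPT (empty_subset OPT)
  have hgap : f OPT - f (S m) ≤ (1 - 1 / (m : ℝ)) ^ m * f OPT := by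
    have hstep (k : ℕ) : f OPT - f (S k) ≤ m * (f (S (k + 1)) - f (S k)) := by
      rw [hSsucc, ← hOPT]
      exact sub_le_card_mul_marginal_of_forall_le hmono hsub OPT (S k) (hgreedy k)
    simpa [hS0, hempty] using sub_le_one_sub_one_div_pow_mul hm' hstep m
  have hexp : (1 - 1 / (m : ℝ)) ^ m ≤ Real.exp (-1) := Real.one_sub_div_pow_le_exp_neg hm'
  have hloss := mul_le_mul_of_nonneg_right hexp hOPT_nonneg
  rw [Real.exp_neg, ← one_div] at hloss
  linarith [sub_mul 1 (1 / Real.exp 1) (f OPT)]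

/-- Greedy approximation guarantee for monotone submodular functions: if `f` is monotone,
submodular, and `f(∅) = 0`, `|OPT| = m ≥ 1`, and `(S k)` is a greedy sequence, then the set
`S* = S m` produced after `m` greedy steps satisfies `f(S*) ≥ (1 − 1/e) · f(OPT)`. -/
theorem submodular_greedy_approximation_guarantee
    {U : Type*} [Fintype U] [DecidableEq U] (f : Finset U → ℝ)
    (hmono : ∀ A B : Finset U, A ⊆ B → f A ≤ f B)
    (hsub : ∀ A B : Finset U, A ⊆ B → ∀ x ∉ B,
      f (B ∪ {x}) - f B ≤ f (A ∪ {x}) - f A)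
    (hempty : f ∅ = 0)
    (OPT : Finset U) (m : ℕ) (hOPT : OPT.card = m) (hm : 1 ≤ m)
    (S : ℕ → Finset U) (x : ℕ → U)
    (hS0 : S 0 = ∅)
    (hSsucc : ∀ k, S (k + 1) = S k ∪ {x k})
    (hgreedy : ∀ k, ∀ y : U, f (S k ∪ {y}) - f (S k) ≤ f (S k ∪ {x k}) - f (S k)) :
    (1 - 1 / Real.exp 1) * f OPT ≤ f (S m) :=
  submodular_greedy_approximation_guarantee_general f hmono hsub hempty OPT m hOPT hm S x hS0 hSsucc
    hgreedy
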